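/- Let g : ℝ² → ℝ be the radial convex function g(x) = F(‖x‖), and let X : [0,∞) → ℝ² be a continuously differentiable solution of the gradient flow Ẋ(t) = −∇g(X(t)) with initial condition 0 < ‖X(0)‖ ≤ e⁻². Then X(t) moves along the ray through X(0) toward the origin, reaches the origin in finite time (there exists T < ∞ with X(T) = 0), and the trajectory has finite path length ∫₀^T ‖Ẋ(t)‖ dt = ‖X(0)‖. -/

import Mathlib

/-!
Since `∇g(x)` is a nonnegative multiple of `x`, the flow satisfies `Ẋ = k(t) X` with `k ≤ 0`.
Then `‖X‖`, `⟪X, X 0⟫` and `‖X‖ ‖X 0‖` all solve the scalar equation `y' = k y`; a solution of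
it has antitone absolute value, so the last two, which agree at `t = 0`, agree forever and `X`
stays on the ray through `X 0`. The radius obeys `ṙ = -F'(r) = 1 / log r`, along which
`r (1 - log r) + t` is conserved, so `r` reaches `0` by time `‖X 0‖ (1 - log ‖X 0‖)`; as the motion
is radial, the path length up to then is the loss of norm `‖X 0‖`.
-/

noncomputable def F (r : ℝ) : ℝ :=
  if r ≤ Real.exp (-2) then ∫ u in (0:ℝ)..r, 1 / (-Real.log u)
  else (∫ u in (0:ℝ)..Real.exp (-2), 1 / (-Real.log u)) + (1/2) * (r - Real.exp (-2))

noncomputable def gRad (x : EuclideanSpace ℝ (Fin 2)) : ℝ := F ‖x‖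

open Real Set
open scoped RealInnerProductSpace

section NormCalculus

variable {E : Type*} [NormedAddCommGroup E] [InnerProductSpace ℝ E]

theorem hasFDerivAt_norm {x : E} (hx : x ≠ 0) :
    HasFDerivAt (‖·‖) (‖x‖⁻¹ • innerSL ℝ x) x := by
  have h := (hasStrictFDerivAt_norm_sq x).hasFDerivAt.sqrt (by positivity)
  simp only [sqrt_sq (norm_nonneg _)] at h
  convert h using 1
  ext y
  simp only [smul_apply, coe_innerSL_apply, smul_eq_mul, nsmul_eq_mul, Nat.cast_ofNat]
  have : ‖x‖ ≠ 0 := norm_ne_zero_iff.mpr hx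
  field_simp

theorem hasGradientAt_comp_norm [CompleteSpace E] {f : ℝ → ℝ} {f' : ℝ} {x : E} (hx : x ≠ 0)
    (hf : HasDerivAt f f' ‖x‖) : HasGradientAt (fun y => f ‖y‖) ((f' / ‖x‖) • x) x := by
  rw [hasGradientAt_iff_hasFDerivAt]
  refine (hf.comp_hasFDerivAt x (hasFDerivAt_norm hx)).congr_fderiv ?_
  ext y
  simp only [smul_apply, coe_innerSL_apply, smul_eq_mul, map_smul,
    InnerProductSpace.toDual_apply_apply]
  ring

/-- No differentiability is needed: where `f` has no derivative, `gradient f` is `0` anyway. -/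
theorem gradient_zero_of_even [CompleteSpace E] {f : E → ℝ} (hf : ∀ x, f (-x) = f x) :
    gradient f 0 = 0 := by
  have h := fderiv_comp_smul (𝕜 := ℝ) (f := f) (x := (0 : E)) (-1)
  simp only [neg_smul, one_smul, hf, smul_zero] at h
  have h0 : fderiv ℝ f 0 = 0 := by
    ext v
    have hv := congrArg (· v) h
    simp only [neg_apply] at hv
    rw [zero_apply]
    linarith
  simp [gradient, h0]

end NormCalculus

section RadialVelocity

variable {E : Type*} [NormedAddCommGroup E] [InnerProductSpace ℝ E]
variable {u : ℝ → E} {k : ℝ → ℝ}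

theorem hasDerivAt_norm_of_hasDerivAt_smul {c t : ℝ} (h : HasDerivAt u (c • u t) t) :
    HasDerivAt (‖u ·‖) (c * ‖u t‖) t := by
  by_cases h0 : u t = 0
  · rw [h0, smul_zero] at h
    rw [h0, norm_zero, mul_zero]
    rw [hasDerivAt_iff_isLittleO] at h ⊢
    simpa [h0] using h.norm_left
  · refine ((hasFDerivAt_norm h0).comp_hasDerivAt t h).congr_deriv ?_
    have : ‖u t‖ ≠ 0 := norm_ne_zero_iff.mpr h0
    simp only [map_smul, smul_apply, coe_innerSL_apply, real_inner_self_eq_norm_sq, smul_eq_mul]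
    field_simp

theorem antitoneOn_norm_of_hasDerivAt_smul {D : Set ℝ} (hD : Convex ℝ D) (hu : ContinuousOn u D)
    (hu' : ∀ t ∈ interior D, HasDerivAt u (k t • u t) t) (hk : ∀ t ∈ interior D, k t ≤ 0) :
    AntitoneOn (‖u ·‖) D :=
  antitoneOn_of_hasDerivWithinAt_nonpos hD hu.norm
    (fun t ht => (hasDerivAt_norm_of_hasDerivAt_smul (hu' t ht)).hasDerivWithinAt)
    (fun t ht => mul_nonpos_of_nonpos_of_nonneg (hk t ht) (norm_nonneg _))

theorem norm_smul_eq_norm_smul_of_hasDerivAt_smul {D : Set ℝ} (hD : Convex ℝ D)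
    (hu : ContinuousOn u D)    (hu' : ∀ t ∈ interior D, HasDerivAt u (k t • u t) t) (hk : ∀ t ∈ interior D, k t ≤ 0)
    {a t : ℝ} (ha : a ∈ D) (ht : t ∈ D) (hat : a ≤ t) :
    ‖u a‖ • u t = ‖u t‖ • u a := by
  set f : ℝ → ℝ := fun s => ⟪u s, u a⟫ - ‖u s‖ * ‖u a‖
  have hf : ContinuousOn f D := (hu.inner continuousOn_const).sub (hu.norm.mul continuousOn_const)
  have hf' : ∀ s ∈ interior D, HasDerivAt f (k s • f s) s := by
    intro s hs
    have h1 := (hu' s hs).inner ℝ (hasDerivAt_const s (u a))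
    have h2 := (hasDerivAt_norm_of_hasDerivAt_smul (hu' s hs)).mul_const ‖u a‖
    refine (h1.sub h2).congr_deriv ?_
    simp only [inner_zero_right, real_inner_smul_left, zero_add, smul_eq_mul, f]
    ring
  have hfa : f a = 0 := by simp [f, sq]
  have hft : ‖f t‖ ≤ ‖f a‖ := antitoneOn_norm_of_hasDerivAt_smul hD hf hf' hk ha ht hat
  rw [hfa, norm_zero, norm_le_zero_iff, sub_eq_zero] at hft
  exact inner_eq_norm_mul_iff_real.mp hft

theorem integral_norm_smul_eq_sub_of_hasDerivAt_smul {a b : ℝ} (hab : a ≤ b)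
    (hu : ContinuousOn u (Icc a b)) (hu' : ∀ t ∈ Ioo a b, HasDerivAt u (k t • u t) t)
    (hk : ∀ t ∈ Ioo a b, k t ≤ 0) :
    ∫ t in a..b, ‖k t • u t‖ = ‖u a‖ - ‖u b‖ := by
  have hderiv : ∀ t ∈ Ioo a b, HasDerivAt (fun s => -‖u s‖) ‖k t • u t‖ t := by
    intro t ht
    refine (hasDerivAt_norm_of_hasDerivAt_smul (hu' t ht)).neg.congr_deriv ?_
    rw [norm_smul, Real.norm_of_nonpos (hk t ht)]
    ring
  have hint :=
    intervalIntegral.integrableOn_deriv_of_nonneg hu.norm.neg hderiv fun _ _ => norm_nonneg _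
  rw [intervalIntegral.integral_eq_sub_of_hasDerivAt_of_le hab hu.norm.neg hderiv
    ((intervalIntegrable_iff_integrableOn_Ioc_of_le hab).mpr hint)]
  simp only [Pi.neg_apply]
  ring

end RadialVelocity

noncomputable def F' (r : ℝ) : ℝ := if r ≤ exp (-2) then 1 / -log r else 1 / 2

theorem F'_of_le {r : ℝ} (h : r ≤ exp (-2)) : F' r = 1 / -log r := if_pos h

theorem F'_nonneg {r : ℝ} (hr : 0 ≤ r) : 0 ≤ F' r := by
  unfold F'
  split_ifs with h
  · have h1 : exp (-2) ≤ 1 := exp_le_one_iff.mpr (by norm_num)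
    exact one_div_nonneg.mpr (neg_nonneg.mpr (log_nonpos hr (h.trans h1)))
  · norm_num

theorem log_le_neg_two {r : ℝ} (h0 : 0 < r) (h : r ≤ exp (-2)) : log r ≤ -2 := by
  simpa using log_le_log h0 h

theorem monotoneOn_one_div_neg_log : MonotoneOn (fun u => 1 / -log u) (Icc 0 (exp (-2))) := by
  rintro u ⟨hu0, -⟩ v ⟨hv0, hv⟩ huv
  rcases hu0.eq_or_lt with rfl | hu
  · simpa using log_nonpos hv0 (hv.trans (exp_le_one_iff.mpr (by norm_num)))
  · exact one_div_le_one_div_of_le (by linarith [log_le_neg_two (hu.trans_le huv) hv])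
      (neg_le_neg (log_le_log hu huv))

theorem hasDerivAt_integral_one_div_neg_log {r : ℝ} (h0 : 0 < r) (h : r ≤ exp (-2)) :
    HasDerivAt (fun s => ∫ u in (0 : ℝ)..s, 1 / -log u) (1 / -log r) r := by
  refine intervalIntegral.integral_hasDerivAt_right ?_ ?_ ?_
  · refine (monotoneOn_one_div_neg_log.mono ?_).intervalIntegrable
    rw [uIcc_of_le h0.le]
    exact Icc_subset_Icc_right h
  · exact (measurable_const.div measurable_log.neg).stronglyMeasurable.stronglyMeasurableAtFilter
  · exact continuousAt_const.div (continuousAt_log h0.ne').neg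
      (by linarith [log_le_neg_two h0 h])

theorem hasDerivAt_F {r : ℝ} (hr : 0 < r) : HasDerivAt F (F' r) r := by
  have hleft : r ≤ exp (-2) → HasDerivWithinAt F (1 / -log r) (Iic (exp (-2))) r := fun h =>
    (hasDerivAt_integral_one_div_neg_log hr h).hasDerivWithinAt.congr (fun s hs => if_pos hs)
      (if_pos h)
  have hright : exp (-2) ≤ r → HasDerivWithinAt F (1 / 2) (Ici (exp (-2))) r := by
    intro h
    have hF : ∀ s ∈ Ici (exp (-2)),
        F s = (∫ u in (0 : ℝ)..exp (-2), 1 / -log u) + 1 / 2 * (s - exp (-2)) := by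
      intro s hs
      unfold F
      split_ifs with h'
      · rw [le_antisymm h' hs, sub_self, mul_zero, add_zero]
      · rfl
    refine HasDerivWithinAt.congr ?_ hF (hF r h)
    simpa using (((hasDerivAt_id r).sub_const (exp (-2))).const_mul (1 / 2 : ℝ)).const_add
      (∫ u in (0 : ℝ)..exp (-2), 1 / -log u) |>.hasDerivWithinAt
  rcases lt_trichotomy r (exp (-2)) with h | h | h
  · rw [F'_of_le h.le]
    exact (hleft h.le).hasDerivAt (Iic_mem_nhds h)
  · subst h
    have hc : 1 / -log (exp (-2)) = (1 / 2 : ℝ) := by norm_num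
    rw [F'_of_le le_rfl, ← hasDerivWithinAt_univ, ← Iic_union_Ici]
    exact (hleft le_rfl).union (hc ▸ hright le_rfl)
  · rw [F', if_neg (not_le.mpr h)]
    exact (hright h.le).hasDerivAt (Ici_mem_nhds h)

theorem gradient_gRad (x : EuclideanSpace ℝ (Fin 2)) :
    gradient gRad x = (F' ‖x‖ / ‖x‖) • x := by
  rcases eq_or_ne x 0 with rfl | hx
  · rw [smul_zero]
    exact gradient_zero_of_even fun x => by simp only [gRad, norm_neg]
  · exact (hasGradientAt_comp_norm hx (hasDerivAt_F (norm_pos_iff.mpr hx))).gradient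

/-- The time `∫₀^r (-log s) ds` that `ṙ = 1 / log r` needs to bring `r` down to `0`. -/
noncomputable def extinctionTime (r : ℝ) : ℝ := r * (1 - log r)

theorem extinctionTime_pos {r : ℝ} (h0 : 0 < r) (h1 : r < 1) : 0 < extinctionTime r :=
  mul_pos h0 (by linarith [log_neg h0 h1])

theorem hasDerivAt_extinctionTime {r : ℝ} (hr : 0 < r) :
    HasDerivAt extinctionTime (-log r) r := by
  refine ((hasDerivAt_id r).mul ((hasDerivAt_const r 1).sub (hasDerivAt_log hr.ne'))).congr_deriv ?_
  simp only [id, Pi.sub_apply]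
  field_simp
  ring

theorem extinctionTime_add_eq {r : ℝ → ℝ} {a b : ℝ} (hab : a < b) (hr : ContinuousOn r (Icc a b))
    (hr01 : ∀ t ∈ Icc a b, r t ∈ Ioo 0 1) (hr' : ∀ t ∈ Ioo a b, HasDerivAt r (1 / log (r t)) t) :
    extinctionTime (r b) + b = extinctionTime (r a) + a := by
  have hcont : ContinuousOn (fun t => extinctionTime (r t) + t) (Icc a b) := fun t ht =>
    ((hasDerivAt_extinctionTime (hr01 t ht).1).continuousAt.comp_continuousWithinAt
      (hr t ht)).add continuousWithinAt_id
  have hderiv : ∀ t ∈ Ioo a b, HasDerivAt (fun t => extinctionTime (r t) + t) 0 t := by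
    intro t ht
    obtain ⟨h0, h1⟩ := hr01 t (Ioo_subset_Icc_self ht)
    refine (((hasDerivAt_extinctionTime h0).comp t (hr' t ht)).add (hasDerivAt_id t)).congr_deriv ?_
    field_simp [(log_neg h0 h1).ne]
    ring
  obtain ⟨c, -, hc⟩ := exists_hasDerivAt_eq_slope _ _ hab hcont hderiv
  rw [eq_comm, div_eq_zero_iff, sub_eq_zero] at hc
  exact hc.resolve_right (sub_pos.mpr hab).ne'

theorem apply_extinctionTime_le_zero {r : ℝ → ℝ} (hr : ContinuousOn r (Ici 0))
    (hanti : AntitoneOn r (Ici 0)) (h0 : 0 < r 0) (hc : r 0 ≤ exp (-2))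
    (hr' : ∀ t > 0, 0 < r t → HasDerivAt r (-F' (r t)) t) :
    r (extinctionTime (r 0)) ≤ 0 := by
  set T := extinctionTime (r 0)
  have hlt1 : r 0 < 1 := hc.trans_lt (exp_lt_one_iff.mpr (by norm_num))
  have hT : 0 < T := extinctionTime_pos h0 hlt1
  by_contra! hrT
  have hr01 : ∀ t ∈ Icc 0 T, r t ∈ Ioo 0 1 := fun t ht =>
    ⟨hrT.trans_le (hanti ht.1 hT.le ht.2), (hanti self_mem_Ici ht.1 ht.1).trans_lt hlt1⟩
  have hlog : ∀ t ∈ Ioo 0 T, HasDerivAt r (1 / log (r t)) t := by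
    intro t ht
    refine (hr' t ht.1 (hr01 t (Ioo_subset_Icc_self ht)).1).congr_deriv ?_
    rw [F'_of_le ((hanti self_mem_Ici ht.1.le ht.1.le).trans hc), one_div_neg_eq_neg_one_div,
      neg_neg]
  have hconst := extinctionTime_add_eq hT (hr.mono Icc_subset_Ici_self) hr01 hlog
  have hpos := hr01 T (right_mem_Icc.mpr hT.le)
  linarith [extinctionTime_pos hpos.1 hpos.2]

theorem gradient_flow_radial_finite_time_general
    (X X' : ℝ → EuclideanSpace ℝ (Fin 2))
    (hX' : ∀ t ≥ (0:ℝ), HasDerivWithinAt X (X' t) (Set.Ici 0) t)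
    (hflow : ∀ t ≥ (0:ℝ), X' t = -gradient gRad (X t))
    (h0 : 0 < ‖X 0‖) (h0' : ‖X 0‖ ≤ Real.exp (-2)) :
    ∃ ρ : ℝ → ℝ, ρ 0 = 1 ∧
      (∀ t ≥ (0:ℝ), X t = ρ t • X 0) ∧
      (∀ t ≥ (0:ℝ), 0 ≤ ρ t) ∧
      AntitoneOn ρ (Set.Ici 0) ∧
      ∃ T ≥ (0:ℝ), X T = 0 ∧ (∫ t in (0:ℝ)..T, ‖X' t‖) = ‖X 0‖ := by
  set k : ℝ → ℝ := fun t => -(F' ‖X t‖ / ‖X t‖)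
  have hk : ∀ t, k t ≤ 0 := fun t => neg_nonpos.mpr (by positivity [F'_nonneg (norm_nonneg (X t))])
  have hvel : ∀ t ≥ 0, X' t = k t • X t := fun t ht => by rw [hflow t ht, gradient_gRad, neg_smul]
  have hX : ContinuousOn X (Ici 0) := fun t ht => (hX' t ht).continuousWithinAt
  have hderiv : ∀ t ∈ interior (Ici 0), HasDerivAt X (k t • X t) t := fun t ht => by
    rw [interior_Ici] at ht
    exact hvel t ht.le ▸ (hX' t ht.le).hasDerivAt (Ici_mem_nhds ht)
  have hanti := antitoneOn_norm_of_hasDerivAt_smul (convex_Ici 0) hX hderiv fun t _ => hk t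
  set T := extinctionTime ‖X 0‖
  have hT : 0 < T := extinctionTime_pos h0 (h0'.trans_lt (exp_lt_one_iff.mpr (by norm_num)))
  have hXT : X T = 0 := by
    refine norm_le_zero_iff.mp
      (apply_extinctionTime_le_zero hX.norm hanti h0 h0' fun t ht hpos => ?_)
    refine (hasDerivAt_norm_of_hasDerivAt_smul (hderiv t (by rwa [interior_Ici]))).congr_deriv ?_
    simp only [k]
    field_simp
  refine ⟨fun t => ‖X t‖ / ‖X 0‖, div_self h0.ne', fun t ht => ?_, fun t _ => by positivity,
    fun s hs t ht hst => div_le_div_of_nonneg_right (hanti hs ht hst) h0.le, T, hT.le, hXT, ?_⟩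
  · have h := norm_smul_eq_norm_smul_of_hasDerivAt_smul (convex_Ici 0) hX hderiv
      (fun t _ => hk t) self_mem_Ici ht ht
    show X t = (‖X t‖ / ‖X 0‖) • X 0
    rw [div_eq_inv_mul, mul_smul, ← h, inv_smul_smul₀ h0.ne']
  calc ∫ t in (0:ℝ)..T, ‖X' t‖ = ∫ t in (0:ℝ)..T, ‖k t • X t‖ :=
        intervalIntegral.integral_congr fun t ht => by
          rw [hvel t (by rw [uIcc_of_le hT.le] at ht; exact ht.1)]
    _ = ‖X 0‖ - ‖X T‖ := integral_norm_smul_eq_sub_of_hasDerivAt_smul hT.le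
        (hX.mono Icc_subset_Ici_self) (fun t ht => hderiv t (by rw [interior_Ici]; exact ht.1))
        fun t _ => hk t
    _ = ‖X 0‖ := by rw [hXT, norm_zero, sub_zero]

/-- the gradient flow `Ẋ(t) = −∇g(X(t))` of the radial potential
`g(x) = F(‖x‖)`, started with `0 < ‖X(0)‖ ≤ e⁻²`, moves along the ray through `X(0)`
toward the origin, reaches the origin in finite time `T`, and has finite path length
`∫₀^T ‖Ẋ(t)‖ dt = ‖X(0)‖`. -/
theorem gradient_flow_radial_finite_time
    (X X' : ℝ → EuclideanSpace ℝ (Fin 2))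
    (hX' : ∀ t ≥ (0:ℝ), HasDerivWithinAt X (X' t) (Set.Ici 0) t)
    (hX'cont : ContinuousOn X' (Set.Ici 0))
    (hflow : ∀ t ≥ (0:ℝ), X' t = -gradient gRad (X t))
    (h0 : 0 < ‖X 0‖) (h0' : ‖X 0‖ ≤ Real.exp (-2)) :
    ∃ ρ : ℝ → ℝ, ρ 0 = 1 ∧
      (∀ t ≥ (0:ℝ), X t = ρ t • X 0) ∧
      (∀ t ≥ (0:ℝ), 0 ≤ ρ t) ∧
      AntitoneOn ρ (Set.Ici 0) ∧
      ∃ T ≥ (0:ℝ), X T = 0 ∧ (∫ t in (0:ℝ)..T, ‖X' t‖) = ‖X 0‖ :=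
  gradient_flow_radial_finite_time_general X X' hX' hflow h0 h0'
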